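/- arXiv:2311.03118 — 2 statements merged into one kernel-verified Lean document; each statement's English description precedes it below -/
import Mathlib

section
/- Let p : ℝ → ℝ be a polynomial of degree k ≥ 1. Then there exist constants b₀, b₁, ..., b_k ∈ ℝ such that b₀ + b₁·p(n-1) + b₂·p(n-2) + ... + b_k·p(n-k) = n for all n ∈ ℝ. Consequently, the sequence s(n) = p(n) satisfies the depth-k recurrence s(n) = p(b₀ + b₁·s(n-1) + ... + b_k·s(n-k)). -/
/-!
The `m`-th forward difference of a polynomial `p` of degree `m + 1` is an affine function with
slope `lc(p) · (m + 1)!`, nonzero in characteristic zero. Evaluated at `x - (m + 1)` it is a fixed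
linear combination of `p(x - 1), …, p(x - m - 1)`, so solving for `x` gives the coefficients `b`.
-/

open Finset Polynomial fwdDiff
open scoped Nat

namespace Polynomial

section CommRing

variable {R : Type*} [CommRing R]

theorem natDegree_comp_X_add_C_sub_le (q : R[X]) (h : R) :
    (q.comp (X + C h) - q).natDegree ≤ q.natDegree - 1 := by
  rw [← taylor_apply, natDegree_le_iff_coeff_eq_zero]
  intro N hN
  rcases (show q.natDegree ≤ N by omega).eq_or_lt with rfl | hlt
  · rw [coeff_sub, coeff_taylor_natDegree, leadingCoeff, sub_self]
  · rw [coeff_sub, coeff_eq_zero_of_natDegree_lt (by rwa [natDegree_taylor]),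
      coeff_eq_zero_of_natDegree_lt hlt, sub_zero]

theorem exists_eval_eq_fwdDiff_iter (q : R[X]) (h : R) (n : ℕ) :
    ∃ Q : R[X], Q.natDegree ≤ q.natDegree - n ∧ Q.eval = (Δ_[h])^[n] q.eval := by
  induction n with
  | zero => exact ⟨q, by simp, rfl⟩
  | succ n ih =>
    obtain ⟨Q, hdeg, heval⟩ := ih
    refine ⟨Q.comp (X + C h) - Q, ?_, ?_⟩
    · have := natDegree_comp_X_add_C_sub_le Q h
      omega
    · ext y
      simp [Function.iterate_succ_apply', ← heval, fwdDiff]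

theorem exists_fwdDiff_iter_eq_affine (p : R[X]) {m : ℕ} (hp : p.natDegree = m + 1) :
    ∃ c : R, ∀ y, (Δ_[1])^[m] p.eval y = p.leadingCoeff * (m + 1)! * y + c := by
  obtain ⟨Q, hdeg, heval⟩ := exists_eval_eq_fwdDiff_iter p 1 m
  have hQ := eq_X_add_C_of_natDegree_le_one (show Q.natDegree ≤ 1 by omega)
  have hslope : Q.coeff 1 = p.leadingCoeff * (m + 1)! := by
    have := congrFun p.fwdDiff_iter_degree_eq_factorial 0
    rw [hp, Function.iterate_succ_apply', ← heval, hQ] at this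
    simpa [fwdDiff] using this
  refine ⟨Q.coeff 0, fun y => ?_⟩
  rw [← heval, ← hslope]
  conv_lhs => rw [hQ]
  simp

theorem exists_sum_alternating_eval_sub_eq_affine (p : R[X]) {m : ℕ}
    (hp : p.natDegree = m + 1) :
    ∃ c : R, ∀ x : R,
      ∑ i : Fin (m + 1), (-1 : R) ^ (i : ℕ) * m.choose i * p.eval (x - ((i : ℕ) + 1)) =
        p.leadingCoeff * (m + 1)! * x + c := by
  obtain ⟨c, hc⟩ := exists_fwdDiff_iter_eq_affine p hp
  refine ⟨c - p.leadingCoeff * (m + 1)! * (m + 1), fun x => ?_⟩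
  have hdiff := hc (x - (m + 1))
  rw [fwdDiff_iter_eq_sum_shift, ← sum_range_reflect] at hdiff
  rw [Fin.sum_univ_eq_sum_range
    (fun i : ℕ => (-1 : R) ^ i * m.choose i * p.eval (x - ((i : R) + 1)))]
  convert hdiff using 1
  · refine sum_congr rfl fun i hi => ?_
    obtain ⟨j, rfl⟩ := Nat.exists_eq_add_of_le (Nat.lt_succ_iff.mp (mem_range.mp hi))
    rw [show i + j + 1 - 1 - i = j by omega, Nat.add_sub_cancel, Nat.choose_symm_add,
      zsmul_eq_mul, nsmul_one]
    push_cast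
    ring_nf
  · ring

end CommRing

theorem exists_add_sum_mul_eval_sub_eq_self {K : Type*} [Field K] [CharZero K] (p : K[X])
    {k : ℕ} (hk : p.natDegree = k) (hk1 : 1 ≤ k) :
    ∃ b : Fin (k + 1) → K,
      ∀ x : K, b 0 + ∑ i : Fin k, b i.succ * p.eval (x - ((i : ℕ) + 1)) = x := by
  obtain ⟨m, rfl⟩ : ∃ m, k = m + 1 := ⟨k - 1, by omega⟩
  obtain ⟨c, hc⟩ := exists_sum_alternating_eval_sub_eq_affine p hk
  set a : K := p.leadingCoeff * (m + 1)!
  have ha : a ≠ 0 :=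
    mul_ne_zero (leadingCoeff_ne_zero.mpr (ne_zero_of_natDegree_gt (by omega : 0 < p.natDegree)))
      (Nat.cast_ne_zero.mpr m.succ.factorial_ne_zero)
  refine ⟨Fin.cons (-c / a) fun i => (-1) ^ (i : ℕ) * m.choose i / a, fun x => ?_⟩
  simp only [Fin.cons_zero, Fin.cons_succ, div_mul_eq_mul_div, ← sum_div, hc x]
  field_simp
  ring

end Polynomial

/-- for a real polynomial `p` of degree `k ≥ 1` there are constants
`b₀,…,b_k` with `b₀ + Σᵢ bᵢ p(n-i) = n` for all real `n`; consequently the sequence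
`s(n) = p(n)` satisfies the depth-`k` recurrence `s(n) = p(b₀ + Σᵢ bᵢ s(n-i))`. -/
theorem polynomial_seq_is_recurrence (p : Polynomial ℝ) (k : ℕ)
    (hk : p.natDegree = k) (hk1 : 1 ≤ k) :
    ∃ b : Fin (k + 1) → ℝ,
      (∀ x : ℝ, b 0 + ∑ i : Fin k, b i.succ * p.eval (x - ((i : ℕ) + 1)) = x) ∧
      (∀ n : ℕ, k ≤ n →
        p.eval (n : ℝ) =
          p.eval (b 0 + ∑ i : Fin k, b i.succ * p.eval ((n : ℝ) - ((i : ℕ) + 1)))) := by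
  obtain ⟨b, hb⟩ := exists_add_sum_mul_eval_sub_eq_self p hk hk1
  exact ⟨b, hb, fun n _ => by rw [hb]⟩
end

section
/- For every term t ∈ T(Σ,V) there exists a flat term t' ∈ T(Σ',V), where Σ' extends Σ by a single fresh unary operator ι, such that for every Σ-algebra (Y,α), extending α to a Σ'-algebra α' by interpreting ι as the identity on Y, one has cata(α)(t) = cata(α')(t'). -/
universe u v
inductive Tm (S : ℕ → Type u) (V : Type v) : Type (max u v) where
  | var : V → Tm S V
  | op : {n : ℕ} → S n → (Fin n → Tm S V) → Tm S V

namespace Tm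
variable {S : ℕ → Type u} {V : Type v}

/-- the subterm `t|_p` at a position `p`, if `p` is a position of `t` -/
def subtermAt : Tm S V → List ℕ → Option (Tm S V)
  | t, [] => some t
  | var _, _ :: _ => none
  | op (n := n) _ ts, i :: p => if h : i < n then subtermAt (ts ⟨i, h⟩) p else none

/-- the depth `d(t)`: the maximal length of a position of `t` -/
def depth : Tm S V → ℕ
  | var _ => 0
  | op (n := n) _ ts => if n = 0 then 0 else (Finset.univ.sup fun i => depth (ts i)) + 1

end Tm
open Tm

namespace Tm

/-- a term is flat if every variable occurs at depth exactly `d(t)` -/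
def Flat {S : ℕ → Type u} {V : Type v} (t : Tm S V) : Prop :=
  ∀ (p : List ℕ) (w : V), subtermAt t p = some (Tm.var w) → p.length = depth t

/-- evaluation (catamorphism) of a term in a Σ-algebra, with assignment `ρ` of variables -/
def cata {S : ℕ → Type u} {V : Type v} {Y : Type*}
    (α : ∀ n, S n → (Fin n → Y) → Y) (ρ : V → Y) : Tm S V → Y
  | var w => ρ w
  | op (n := n) f ts => α n f (fun i => cata α ρ (ts i))

end Tm

/-- the signature Σ' extending Σ by a single fresh unary operator ι -/
def ExtSig (S : ℕ → Type u) : ℕ → Type u := fun n => S n ⊕ PLift (n = 1)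

/-- extension of a Σ-algebra to a Σ'-algebra interpreting ι as the identity -/
def extAlg {S : ℕ → Type u} {Y : Type*} (α : ∀ n, S n → (Fin n → Y) → Y) :
    ∀ n, ExtSig S n → (Fin n → Y) → Y
  | n, Sum.inl f, ys => α n f ys
  | _, Sum.inr h, ys => ys (Fin.cast h.down.symm 0)

namespace FlatAux

variable {S : ℕ → Type u} {V : Type v}

/-- the fresh unary operator applied once -/
def iota (t : Tm (ExtSig S) V) : Tm (ExtSig S) V :=
  Tm.op (n := 1) (Sum.inr ⟨rfl⟩) (fun _ => t)

/-- iterate `iota` `k` times -/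
def pad : ℕ → Tm (ExtSig S) V → Tm (ExtSig S) V
  | 0, t => t
  | k + 1, t => iota (pad k t)

/-- the flattening -/
def flatten : Tm S V → Tm (ExtSig S) V
  | Tm.var w => Tm.var w
  | Tm.op (n := n) f ts =>
      Tm.op (Sum.inl f)
        (fun i => pad ((Finset.univ.sup fun j => (ts j).depth) - (ts i).depth)
          (flatten (ts i)))

lemma depth_iota (t : Tm (ExtSig S) V) : (iota t).depth = t.depth + 1 := by
  simp [iota, Tm.depth]

lemma depth_pad (k : ℕ) (t : Tm (ExtSig S) V) : (pad k t).depth = t.depth + k := by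
  induction k with
  | zero => rfl
  | succ k ih => simp [pad, depth_iota, ih]; ring

lemma depth_flatten (t : Tm S V) : (flatten t).depth = t.depth := by
  induction t with
  | var w => rfl
  | op f ts ih =>
    rename_i n
    simp only [flatten, Tm.depth]
    rcases Nat.eq_zero_or_pos n with h | h
    · simp [h]
    · have hn : n ≠ 0 := h.ne'
      simp only [hn, if_false]
      congr 1
      have : ∀ i : Fin n,
          (pad ((Finset.univ.sup fun j => (ts j).depth) - (ts i).depth)
            (flatten (ts i))).depth = Finset.univ.sup fun j => (ts j).depth := by
        intro i
        rw [depth_pad, ih]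
        exact Nat.add_sub_cancel' (Finset.le_sup (f := fun j => (ts j).depth) (Finset.mem_univ i))
      rw [funext this]
      haveI : Nonempty (Fin n) := ⟨⟨0, h⟩⟩
      exact Finset.sup_const Finset.univ_nonempty _

lemma flat_iota {t : Tm (ExtSig S) V} (ht : Tm.Flat t) : Tm.Flat (iota t) := by
  intro p w hp
  cases p with
  | nil => simp [Tm.subtermAt, iota] at hp
  | cons i q =>
    simp only [iota, Tm.subtermAt] at hp
    split_ifs at hp with h
    · rw [depth_iota]
      simpa using congrArg Nat.succ (ht q w hp)
  
lemma flat_pad (k : ℕ) {t : Tm (ExtSig S) V} (ht : Tm.Flat t) : Tm.Flat (pad k t) := by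
  induction k with
  | zero => exact ht
  | succ k ih => exact flat_iota ih

lemma flat_flatten (t : Tm S V) : Tm.Flat (flatten t) := by
  induction t with
  | var w =>
    intro p w' hp
    cases p with
    | nil => simp [Tm.subtermAt, flatten, Tm.depth] at hp ⊢
    | cons i q => simp [Tm.subtermAt, flatten] at hp
  | op f ts ih =>
    rename_i n
    intro p w hp
    cases p with
    | nil => simp [Tm.subtermAt, flatten] at hp
    | cons i q =>
      simp only [flatten, Tm.subtermAt] at hp
      split_ifs at hp with h
      have hq := flat_pad _ (ih ⟨i, h⟩) q w hp
      rw [depth_pad, depth_flatten] at hq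
      have hle : (ts ⟨i, h⟩).depth ≤ Finset.univ.sup fun j => (ts j).depth :=
        Finset.le_sup (f := fun j => (ts j).depth) (Finset.mem_univ _)
      rw [Nat.add_sub_cancel' hle] at hq
      have hn : n ≠ 0 := by omega
      rw [depth_flatten]
      simp [Tm.depth, hn, List.length_cons, hq]

lemma cata_iota {Y : Type*} (α : ∀ n, S n → (Fin n → Y) → Y) (ρ : V → Y)
    (t : Tm (ExtSig S) V) :
    Tm.cata (extAlg α) ρ (iota t) = Tm.cata (extAlg α) ρ t := by
  simp [iota, Tm.cata, extAlg]

lemma cata_pad {Y : Type*} (α : ∀ n, S n → (Fin n → Y) → Y) (ρ : V → Y)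
    (k : ℕ) (t : Tm (ExtSig S) V) :
    Tm.cata (extAlg α) ρ (pad k t) = Tm.cata (extAlg α) ρ t := by
  induction k with
  | zero => rfl
  | succ k ih => rw [pad, cata_iota, ih]

lemma cata_flatten {Y : Type*} (α : ∀ n, S n → (Fin n → Y) → Y) (ρ : V → Y)
    (t : Tm S V) :
    Tm.cata α ρ t = Tm.cata (extAlg α) ρ (flatten t) := by
  induction t with
  | var w => rfl
  | op f ts ih =>
    simp only [flatten, Tm.cata, extAlg]
    congr 1
    funext i
    rw [cata_pad, ← ih]

end FlatAux

/-- every term has a flat equivalent over the signature extended by a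
fresh unary identity operator ι, with the same evaluation in every Σ-algebra
(ι interpreted as the identity). -/
theorem exists_flat_equivalent (S : ℕ → Type u) (V : Type v) (t : Tm S V) :
    ∃ t' : Tm (ExtSig S) V, Tm.Flat t' ∧
      ∀ (Y : Type (max u v)) (α : ∀ n, S n → (Fin n → Y) → Y) (ρ : V → Y),
        Tm.cata α ρ t = Tm.cata (extAlg α) ρ t' :=
  ⟨FlatAux.flatten t, FlatAux.flat_flatten t, fun Y α ρ => FlatAux.cata_flatten α ρ t⟩
end
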